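/- Suppose H_{i-1} is consistent with Q_{i-1}, i.e., ⟨H_{i-1}(s,a), R⟩ = Q_{i-1}(s,a) for all (s,a). If the Q-learning update Q_i(s_t,a_t) = Q_{i-1}(s_t,a_t) + α(r_t + γ Q_{i-1}(s_{t+1}, m) − Q_{i-1}(s_t,a_t)) with m = argmax_a Q_{i-1}(s_{t+1},a) and r_t = R(s_t,a_t), and the belief-map update H_i(s_t,a_t) = H_{i-1}(s_t,a_t) + α(1_{(s_t,a_t)} + γ H_{i-1}(s_{t+1}, m) − H_{i-1}(s_t,a_t)) are performed simultaneously (with all other entries unchanged), then ⟨H_i(s,a), R⟩ = Q_i(s,a) for all (s,a); i.e., consistency is preserved by one step of the coupled Q-learning/belief-map update. -/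

import Mathlib

/-! The belief-map update is the Q-learning update applied to vectors, and pairing with `R` is
linear, so it carries the one update to the other; the indicator `1_{(s_t,a_t)}` pairs to the
reward `r_t`. -/

/-- Inner product of a belief-map entry with the reward map. -/
noncomputable def ip {S A : Type} [Fintype S] [Fintype A] [DecidableEq S] [DecidableEq A]
    (v R : S × A → ℝ) : ℝ := ∑ q, v q * R q

section InnerProduct

variable {S A : Type} [Fintype S] [Fintype A] [DecidableEq S] [DecidableEq A]

theorem ip_eq_dotProduct (v R : S × A → ℝ) : ip v R = v ⬝ᵥ R := rfl

theorem ip_indicator (p : S × A) (R : S × A → ℝ) :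
    ip (fun q => if q = p then (1 : ℝ) else 0) R = R p := by
  simp [ip]

theorem ip_tdUpdate (v e w R : S × A → ℝ) (α γ : ℝ) :
    ip (fun q => v q + α * (e q + γ * w q - v q)) R
      = ip v R + α * (ip e R + γ * ip w R - ip v R) := by
  have hupdate : (fun q => v q + α * (e q + γ * w q - v q)) = v + α • (e + γ • w - v) := rfl
  simp only [ip_eq_dotProduct, hupdate, add_dotProduct, smul_dotProduct, sub_dotProduct,
    smul_eq_mul]

end InnerProduct

theorem consistency_step_general {S A : Type} [Fintype S] [Fintype A] [DecidableEq S] [DecidableEq A]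
    (R Q : S × A → ℝ) (H : S × A → S × A → ℝ) (α γ : ℝ)
    (st : S) (at_ : A) (st' : S) (m : A)
    (hcons : ∀ p : S × A, ip (H p) R = Q p)
    (Q' : S × A → ℝ)
    (hQ' : Q' = fun p => if p = (st, at_) then
        Q (st, at_) + α * (R (st, at_) + γ * Q (st', m) - Q (st, at_)) else Q p)
    (H' : S × A → S × A → ℝ)
    (hH' : H' = fun p => if p = (st, at_) then
        fun q => H (st, at_) q +
          α * ((if q = (st, at_) then (1 : ℝ) else 0) + γ * H (st', m) q - H (st, at_) q)
      else H p) :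
    ∀ p : S × A, ip (H' p) R = Q' p := by
  intro p
  subst hQ' hH'
  by_cases hp : p = (st, at_)
  · simp only [hp, if_true, ip_tdUpdate, ip_indicator, hcons]
  · simp only [hp, if_false, hcons]

/-- One coupled Q-learning / belief-map update preserves consistency. -/
theorem consistency_step {S A : Type} [Fintype S] [Fintype A] [DecidableEq S] [DecidableEq A]
    (R Q : S × A → ℝ) (H : S × A → S × A → ℝ) (α γ : ℝ)
    (st : S) (at_ : A) (st' : S) (m : A)
    (hm : ∀ a : A, Q (st', a) ≤ Q (st', m))
    (hcons : ∀ p : S × A, ip (H p) R = Q p)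
    (Q' : S × A → ℝ)
    (hQ' : Q' = fun p => if p = (st, at_) then
        Q (st, at_) + α * (R (st, at_) + γ * Q (st', m) - Q (st, at_)) else Q p)
    (H' : S × A → S × A → ℝ)
    (hH' : H' = fun p => if p = (st, at_) then
        fun q => H (st, at_) q +
          α * ((if q = (st, at_) then (1 : ℝ) else 0) + γ * H (st', m) q - H (st, at_) q)
      else H p) :
    ∀ p : S × A, ip (H' p) R = Q' p :=
  consistency_step_general R Q H α γ st at_ st' m hcons Q' hQ' H' hH'
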